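/- Let n, k be positive integers and let y : Fin k → ℕ satisfy ∑_r y_r = n. Then the average number of inversions over all words with content y equals (1/2) ∑_{1≤i<j≤k} y_i y_j; that is, ( ∑_{w with content y} inv(w) ) / #{w with content y} = (1/2) ∑_{1≤i<j≤k} y_i y_j. Equivalently, the conditional expectation of the inversion count I given Y = y in the multinomial experiment is (1/2) ∑_{1≤i<j≤k} y_i y_j. -/

import Mathlib

/-- The number of inversions of a word `w : Fin n → Fin k`: pairs of positions
`s < t` with `w s > w t`. -/
def inversions {n k : ℕ} (w : Fin n → Fin k) : ℕ :=
  (Finset.univ.filter (fun st : Fin n × Fin n => st.1 < st.2 ∧ w st.2 < w st.1)).card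

/-- The content of a word `w : Fin n → Fin k`: `content w r` is the number of
positions `t` with `w t = r`. -/
def content {n k : ℕ} (w : Fin n → Fin k) : Fin k → ℕ :=
  fun r => (Finset.univ.filter (fun t => w t = r)).card

/-!
Reversal `w ↦ w ∘ Fin.rev` is an involution on the words of content `y`, and a pair of positions
carrying letters `r < s` is an inversion of exactly one of `w` and `w ∘ Fin.rev`. Hence
`inv w + inv (w ∘ Fin.rev) = ∑_{r < s} y_r y_s` for every such word, and averaging over the class
gives half of this. The class is nonempty because `∑ r, y r = n`.
-/

open Finset

section
variable {n k : ℕ}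

theorem inversions_eq_card_gt_and_lt (w : Fin n → Fin k) :
    inversions w = #{ab : Fin n × Fin n | ab.2 < ab.1 ∧ w ab.1 < w ab.2} :=
  card_equiv (Equiv.prodComm _ _) (by simp)

theorem inversions_comp_rev (w : Fin n → Fin k) :
    inversions (w ∘ Fin.rev) = #{ab : Fin n × Fin n | ab.1 < ab.2 ∧ w ab.1 < w ab.2} :=
  card_equiv ((Equiv.prodComm _ _).trans (Fin.revPerm.prodCongr Fin.revPerm))
    (by simp [Fin.rev_lt_rev])

theorem inversions_add_inversions_comp_rev (w : Fin n → Fin k) :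
    inversions w + inversions (w ∘ Fin.rev) = #{ab : Fin n × Fin n | w ab.1 < w ab.2} := by
  rw [inversions_eq_card_gt_and_lt, inversions_comp_rev, add_comm,
    ← card_filter_add_card_filter_not (s := {ab : Fin n × Fin n | w ab.1 < w ab.2})
      (p := fun ab => ab.1 < ab.2)]
  simp only [filter_filter]
  congr 2
  · ext; simp only [and_comm]
  · ext ab
    simp only [mem_filter, mem_univ, true_and]
    constructor
    · rintro ⟨hab, hw⟩
      exact ⟨hw, hab.asymm⟩
    · rintro ⟨hw, hab⟩
      exact ⟨(not_lt.1 hab).lt_of_ne fun h => hw.ne (h ▸ rfl), hw⟩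

theorem card_lt_pairs_eq_sum_content_mul (w : Fin n → Fin k) :
    #{ab : Fin n × Fin n | w ab.1 < w ab.2} =
      ∑ rs : Fin k × Fin k with rs.1 < rs.2, content w rs.1 * content w rs.2 := by
  rw [card_eq_sum_card_fiberwise (f := fun ab => (w ab.1, w ab.2))
    (t := {rs : Fin k × Fin k | rs.1 < rs.2}) (fun _ => by simp)]
  refine sum_congr rfl fun rs hrs => ?_
  rw [content, content, ← card_product]
  congr 1
  ext ab
  simp only [mem_filter, mem_univ, true_and, mem_product, Prod.ext_iff] at hrs ⊢
  constructor
  · exact fun h => h.2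
  · rintro ⟨h1, h2⟩
    exact ⟨h1 ▸ h2 ▸ hrs, h1, h2⟩

theorem content_comp_perm (w : Fin n → Fin k) (σ : Equiv.Perm (Fin n)) :
    content (w ∘ σ) = content w :=
  funext fun _ => card_equiv σ (by simp)

theorem exists_content_eq (y : Fin k → ℕ) : ∃ w : Fin (∑ r, y r) → Fin k, content w = y := by
  refine ⟨fun t => (finSigmaFinEquiv.symm t).1, funext fun r => ?_⟩
  rw [content, ← Fintype.card_subtype]
  calc Fintype.card {t // (finSigmaFinEquiv.symm t).1 = r}
      = Fintype.card {p : (i : Fin k) × Fin (y i) // p.1 = r} :=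
        Fintype.card_congr (finSigmaFinEquiv.symm.subtypeEquiv fun _ => Iff.rfl)
    _ = y r := by rw [Fintype.card_congr (Equiv.sigmaSubtype r), Fintype.card_fin]

variable (n) in
def wordsWithContent (y : Fin k → ℕ) : Finset (Fin n → Fin k) := {w | content w = y}

@[simp]
theorem mem_wordsWithContent {y : Fin k → ℕ} {w : Fin n → Fin k} :
    w ∈ wordsWithContent n y ↔ content w = y := by
  simp [wordsWithContent]

theorem wordsWithContent_nonempty {y : Fin k → ℕ} (hy : ∑ r, y r = n) :
    (wordsWithContent n y).Nonempty := by
  subst hy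
  obtain ⟨w, hw⟩ := exists_content_eq y
  exact ⟨w, mem_wordsWithContent.2 hw⟩

theorem sum_inversions_comp_rev_wordsWithContent (y : Fin k → ℕ) :
    ∑ w ∈ wordsWithContent n y, inversions (w ∘ Fin.rev) =
      ∑ w ∈ wordsWithContent n y, inversions w := by
  have hmem (w : Fin n → Fin k) (hw : w ∈ wordsWithContent n y) :
      w ∘ Fin.rev ∈ wordsWithContent n y := by
    rw [mem_wordsWithContent] at hw ⊢
    rw [← hw]
    exact content_comp_perm w Fin.revPerm
  exact sum_nbij' (· ∘ Fin.rev) (· ∘ Fin.rev) hmem hmem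
    (fun w _ => funext fun t => by simp) (fun w _ => funext fun t => by simp) fun _ _ => rfl

theorem two_mul_sum_inversions_wordsWithContent (y : Fin k → ℕ) :
    2 * ∑ w ∈ wordsWithContent n y, inversions w =
      #(wordsWithContent n y) * ∑ rs : Fin k × Fin k with rs.1 < rs.2, y rs.1 * y rs.2 := by
  calc 2 * ∑ w ∈ wordsWithContent n y, inversions w
      = ∑ w ∈ wordsWithContent n y, (inversions w + inversions (w ∘ Fin.rev)) := by
        rw [sum_add_distrib, sum_inversions_comp_rev_wordsWithContent, two_mul]
    _ = ∑ _w ∈ wordsWithContent n y, ∑ rs : Fin k × Fin k with rs.1 < rs.2, y rs.1 * y rs.2 :=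
        sum_congr rfl fun w hw => by
          rw [inversions_add_inversions_comp_rev, card_lt_pairs_eq_sum_content_mul,
            mem_wordsWithContent.1 hw]
    _ = _ := by rw [sum_const, smul_eq_mul]

end

theorem conditional_expectation_inversions_general (n k : ℕ)
    (y : Fin k → ℕ) (hy : ∑ r, y r = n) :
    (∑ w ∈ Finset.univ.filter (fun w : Fin n → Fin k => content w = y),
        (inversions w : ℚ)) /
      ((Finset.univ.filter (fun w : Fin n → Fin k => content w = y)).card : ℚ) =
    (1 / 2 : ℚ) *
      ∑ rs ∈ Finset.univ.filter (fun rs : Fin k × Fin k => rs.1 < rs.2),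
        (y rs.1 : ℚ) * y rs.2 := by
  change (∑ w ∈ wordsWithContent n y, (inversions w : ℚ)) / #(wordsWithContent n y) = _
  have hcard : (#(wordsWithContent n y) : ℚ) ≠ 0 := by
    exact_mod_cast (wordsWithContent_nonempty hy).card_pos.ne'
  have h := congrArg (Nat.cast : ℕ → ℚ) (two_mul_sum_inversions_wordsWithContent (n := n) y)
  push_cast at h
  rw [div_eq_iff hcard]
  linarith

/-- The average number of inversions over all words with content `y` (i.e. the
conditional expectation of the inversion count `I` given `Y = y`) equals
`(1/2) ∑_{1 ≤ i < j ≤ k} y_i y_j`. -/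
theorem conditional_expectation_inversions (n k : ℕ) (hn : 0 < n) (hk : 0 < k)
    (y : Fin k → ℕ) (hy : ∑ r, y r = n) :
    (∑ w ∈ Finset.univ.filter (fun w : Fin n → Fin k => content w = y),
        (inversions w : ℚ)) /
      ((Finset.univ.filter (fun w : Fin n → Fin k => content w = y)).card : ℚ) =
    (1 / 2 : ℚ) *
      ∑ rs ∈ Finset.univ.filter (fun rs : Fin k × Fin k => rs.1 < rs.2),
        (y rs.1 : ℚ) * y rs.2 :=
  conditional_expectation_inversions_general n k y hy
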